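/- If x ≪ y holds for infinite sets x, y ⊆ ℕ, and x' is E-equivalent to x where E is the equivalence relation generated by S₀ and S₁, then x' ≪ y. -/
import Mathlib


noncomputable def enum (x : Set ℕ) (n : ℕ) : ℕ := Nat.nth (· ∈ x) n
noncomputable def S0 (x : Set ℕ) : Set ℕ := Set.range (fun n => enum x (n+1))
noncomputable def S1 (x : Set ℕ) : Set ℕ := Set.range (fun n => enum x (2*n+1))
def sle (x y : Set ℕ) : Prop := ∀ n, enum x n ≤ enum y n
def ll (a b : Set ℕ) : Prop := ∀ m, ∃ k, m < (a ∩ Set.Ioo (enum b k) (enum b (k+1))).ncard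
def Estep (x y : Set ℕ) : Prop := x.Infinite ∧ (y = S0 x ∨ y = S1 x)
def E : Set ℕ → Set ℕ → Prop := Relation.EqvGen Estep
def G (x x' : Set ℕ) : Prop := x' = S0 x ∨ x' = S1 x ∨ x = S0 x' ∨ x = S1 x'
def toSet (f : ℕ → Bool) : Set ℕ := {n | f n = true}
noncomputable def Sb (b : Bool) : Set ℕ → Set ℕ := if b then S1 else S0
noncomputable def Siter : List Bool → Set ℕ → Set ℕ
  | [], y => y
  | b :: rest, y => Siter rest (Sb b y)

noncomputable instance (x : Set ℕ) : DecidablePred (· ∈ x) := fun _ => Classical.dec _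

lemma infinite_setOf_mem {x : Set ℕ} (hx : x.Infinite) : {n | (· ∈ x) n}.Infinite := hx

lemma ll_mono {a a' y : Set ℕ} (h : a ⊆ a') (hll : ll a y) : ll a' y := by
  intro m
  obtain ⟨k, hk⟩ := hll m
  refine ⟨k, lt_of_lt_of_le hk (Set.ncard_le_ncard (Set.inter_subset_inter_left _ h)
    ((Set.finite_Ioo _ _).inter_of_right _))⟩

lemma S0_subset {x : Set ℕ} (hx : x.Infinite) : S0 x ⊆ x := by
  rintro _ ⟨n, rfl⟩
  exact Nat.nth_mem_of_infinite (infinite_setOf_mem hx) _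

lemma S1_subset {x : Set ℕ} (hx : x.Infinite) : S1 x ⊆ x := by
  rintro _ ⟨n, rfl⟩
  exact Nat.nth_mem_of_infinite (infinite_setOf_mem hx) _

lemma S0_infinite {x : Set ℕ} (hx : x.Infinite) : (S0 x).Infinite :=
  Set.infinite_range_of_injective fun a b h => by
    simpa using Nat.nth_injective (infinite_setOf_mem hx) h

lemma S1_infinite {x : Set ℕ} (hx : x.Infinite) : (S1 x).Infinite :=
  Set.infinite_range_of_injective fun a b h => by
    have := Nat.nth_injective (infinite_setOf_mem hx) h
    omega

lemma enum_mem_Ioo {x : Set ℕ} (hx : x.Infinite) {u v N j : ℕ}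
    (hN : N ≤ (x ∩ Set.Ioo u v).ncard) (hj : j < N) :
    enum x (Nat.count (· ∈ x) (u+1) + j) ∈ Set.Ioo u v := by
  have hxi := infinite_setOf_mem hx
  simp only [enum]
  constructor
  · calc u < u + 1 := lt_add_one u
      _ ≤ Nat.nth (· ∈ x) (Nat.count (· ∈ x) (u+1)) := Nat.le_nth_count hxi _
      _ ≤ Nat.nth (· ∈ x) (Nat.count (· ∈ x) (u+1) + j) :=
          Nat.nth_monotone hxi (Nat.le_add_right _ _)
  · by_contra hv
    push_neg at hv
    have hsub : x ∩ Set.Ioo u v ⊆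
        Nat.nth (· ∈ x) '' Set.Ico (Nat.count (· ∈ x) (u+1)) (Nat.count (· ∈ x) (u+1) + j) := by
      rintro a ⟨hax, hau, hav⟩
      refine ⟨Nat.count (· ∈ x) a, ⟨?_, ?_⟩, Nat.nth_count hax⟩
      · exact Nat.count_monotone _ hau
      · have h2 : Nat.nth (· ∈ x) (Nat.count (· ∈ x) a) <
            Nat.nth (· ∈ x) (Nat.count (· ∈ x) (u+1) + j) := by
          rw [Nat.nth_count hax]; exact lt_of_lt_of_le hav hv
        exact (Nat.nth_lt_nth hxi).mp h2
    have hle := Set.ncard_le_ncard hsub ((Set.finite_Ico _ _).image _)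
    rw [Set.ncard_image_of_injective _ (Nat.nth_injective hxi), ← Finset.coe_Ico,
      Set.ncard_coe_finset, Nat.card_Ico] at hle
    omega

lemma ncard_ge_of_image {s : Set ℕ} {m : ℕ} (g : ℕ → ℕ) (hg : Function.Injective g)
    (h : ∀ i, i ≤ m → g i ∈ s) (hs : s.Finite) : m < s.ncard := by
  have hsub : g '' Set.Iic m ⊆ s := by rintro _ ⟨i, hi, rfl⟩; exact h i hi
  have := Set.ncard_le_ncard hsub hs
  rw [Set.ncard_image_of_injective _ hg, ← Finset.coe_Iic, Set.ncard_coe_finset,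
    Nat.card_Iic] at this
  omega

lemma ll_S0 {x y : Set ℕ} (hx : x.Infinite) (hll : ll x y) : ll (S0 x) y := by
  intro m
  obtain ⟨k, hk⟩ := hll (m + 1)
  refine ⟨k, ?_⟩
  set u := enum y k
  set v := enum y (k+1)
  set ℓ := Nat.count (· ∈ x) (u+1) with hℓ
  refine ncard_ge_of_image (fun i => enum x (ℓ + (i + 1)))
    (fun a b h => by simpa using Nat.nth_injective (infinite_setOf_mem hx) h) ?_
    ((Set.finite_Ioo _ _).inter_of_right _)
  intro i hi
  refine ⟨⟨ℓ + i, by simp only [enum]; ring_nf⟩, ?_⟩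
  exact enum_mem_Ioo hx (N := m + 2) (by omega) (by omega)

lemma ll_S1 {x y : Set ℕ} (hx : x.Infinite) (hll : ll x y) : ll (S1 x) y := by
  intro m
  obtain ⟨k, hk⟩ := hll (2 * m + 2)
  refine ⟨k, ?_⟩
  set u := enum y k
  set v := enum y (k+1)
  set ℓ := Nat.count (· ∈ x) (u+1) with hℓ
  refine ncard_ge_of_image (fun i => enum x (2 * (ℓ / 2 + i) + 1))
    (fun a b h => by
      have := Nat.nth_injective (infinite_setOf_mem hx) h
      omega) ?_
    ((Set.finite_Ioo _ _).inter_of_right _)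
  intro i hi
  refine ⟨⟨ℓ / 2 + i, rfl⟩, ?_⟩
  show enum x (2 * (ℓ / 2 + i) + 1) ∈ Set.Ioo u v
  have h1 : 2 * (ℓ / 2 + i) + 1 = ℓ + (2 * (ℓ / 2 + i) + 1 - ℓ) := by omega
  rw [h1]
  exact enum_mem_Ioo hx (N := 2 * m + 3) (by omega) (by omega)

theorem stmt8 (x x' y : Set ℕ) (hx : x.Infinite) (hy : y.Infinite)
    (hll : ll x y) (hE : E x x') : ll x' y := by
  have key : ∀ a b : Set ℕ, E a b →
      (a.Infinite ↔ b.Infinite) ∧ (a.Infinite → (ll a y ↔ ll b y)) := by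
    intro a b hab
    induction hab with
    | rel a b h =>
      obtain ⟨ha, hb⟩ := h
      rcases hb with rfl | rfl
      · exact ⟨⟨fun _ => S0_infinite ha, fun _ => ha⟩,
          fun _ => ⟨ll_S0 ha, ll_mono (S0_subset ha)⟩⟩
      · exact ⟨⟨fun _ => S1_infinite ha, fun _ => ha⟩,
          fun _ => ⟨ll_S1 ha, ll_mono (S1_subset ha)⟩⟩
    | refl a => exact ⟨Iff.rfl, fun _ => Iff.rfl⟩
    | symm a b _ ih =>
      exact ⟨ih.1.symm, fun hb => (ih.2 (ih.1.mpr hb)).symm⟩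
    | trans a b c _ _ ih1 ih2 =>
      exact ⟨ih1.1.trans ih2.1, fun ha => (ih1.2 ha).trans (ih2.2 (ih1.1.mp ha))⟩
  exact ((key x x' hE).2 hx).mp hll
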